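/- For each fixed x > 0, the function ν ↦ 𝒫_ν(x) = (√π Γ(ν + 1/2) / (2 x^ν)) I_ν(x) K_ν(x) is strictly log-convex on (-1/2, ∞). -/

import Mathlib

open Real MeasureTheory Set Filter

/-- Modified Bessel function of the first kind `I_ν`. -/
noncomputable def besselI (ν x : ℝ) : ℝ :=
  ∑' n : ℕ, (x / 2) ^ (2 * (n : ℝ) + ν) / ((n.factorial : ℝ) * Real.Gamma ((n : ℝ) + ν + 1))

/-- Modified Bessel function of the second kind `K_ν`. -/
noncomputable def besselK (ν x : ℝ) : ℝ :=
  ∫ t in Ioi (0 : ℝ), Real.exp (-x * Real.cosh t) * Real.cosh (ν * t)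

/-- Bessel function of the first kind `J_ν`. -/
noncomputable def besselJ (ν x : ℝ) : ℝ :=
  ∑' n : ℕ, (-1 : ℝ) ^ n * (x / 2) ^ (2 * (n : ℝ) + ν) /
    ((n.factorial : ℝ) * Real.Gamma ((n : ℝ) + ν + 1))

/-- Modified Struve function of the first kind `L_ν`. -/
noncomputable def struveL (ν x : ℝ) : ℝ :=
  ∑' n : ℕ, (x / 2) ^ (2 * (n : ℝ) + ν + 1) /
    (Real.Gamma ((n : ℝ) + 3 / 2) * Real.Gamma ((n : ℝ) + ν + 3 / 2))

/-- Airy function `Ai`. -/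
noncomputable def airyAi (t : ℝ) : ℝ :=
  (1 / Real.pi) * ∫ s in Ioi (0 : ℝ), Real.cos (s ^ 3 / 3 + s * t)

/-- Landau constant `b_L = 2^{1/3} ⬝ sup_{t ≥ 0} Ai(t)`. -/
noncomputable def landau_bL : ℝ :=
  (2 : ℝ) ^ ((1 : ℝ) / 3) * sSup (airyAi '' Ici 0)

/-- Landau constant `c_L = sup_{t ≥ 0} t^{1/3} J₀(t)`. -/
noncomputable def landau_cL : ℝ :=
  sSup ((fun t : ℝ => t ^ ((1 : ℝ) / 3) * besselJ 0 t) '' Ici 0)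


/-!
Poisson's integral turns the first factor into an integral,
`√π Γ(ν + 1/2) / (2 x^ν) · I_ν(x) = 2^(-ν-1) ∫_{-1}^{1} e^{xs} (1 - s²)^(ν - 1/2) ds`,
while `K_ν(x) = ∫_0^∞ e^{-x cosh t} cosh(νt) dt`. For fixed `s` resp. `t > 0` the integrands are
log-affine resp. strictly log-convex in `ν` (as `log cosh` is strictly convex), and by Hölder's
inequality `∫ f^θ g^σ ≤ (∫ f)^θ (∫ g)^σ` an integral of (strictly) log-convex functions is again
(strictly) log-convex. So `log 𝒫_ν(x)` is a convex plus a strictly convex function of `ν`.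
-/

open scoped Nat

section IntegralInequalities

variable {α : Type*} [MeasurableSpace α] {μ : Measure α}

theorem integral_rpow_mul_rpow_le {f g : α → ℝ} {θ σ : ℝ} (hθ : 0 < θ) (hσ : 0 < σ)
    (hθσ : θ + σ = 1) (hf : Integrable f μ) (hg : Integrable g μ)
    (hf0 : 0 ≤ᵐ[μ] f) (hg0 : 0 ≤ᵐ[μ] g) :
    ∫ a, f a ^ θ * g a ^ σ ∂μ ≤ (∫ a, f a ∂μ) ^ θ * (∫ a, g a ∂μ) ^ σ := by
  have rpow_rpow_inv : ∀ {c : ℝ}, 0 < c → ∀ {h : α → ℝ}, 0 ≤ᵐ[μ] h →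
      (fun a => (h a ^ c) ^ (1 / c)) =ᵐ[μ] h := by
    intro c hc h h0
    filter_upwards [h0] with a ha
    rw [← Real.rpow_mul ha, mul_one_div_cancel hc.ne', Real.rpow_one]
  have memLp : ∀ {c : ℝ}, 0 < c → ∀ {h : α → ℝ}, Integrable h μ → 0 ≤ᵐ[μ] h →
      MemLp (fun a => h a ^ c) (ENNReal.ofReal (1 / c)) μ := by
    intro c hc h hint h0
    have hp : ENNReal.ofReal (1 / c) ≠ 0 := by positivity
    rw [← memLp_norm_rpow_iff (hint.aemeasurable.pow_const c).aestronglyMeasurable hp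
      ENNReal.ofReal_ne_top, ENNReal.toReal_ofReal (by positivity),
      ENNReal.div_self hp ENNReal.ofReal_ne_top, memLp_one_iff_integrable]
    refine hint.congr ((rpow_rpow_inv hc h0).symm.trans ?_)
    filter_upwards [h0] with a ha
    rw [Real.norm_of_nonneg (Real.rpow_nonneg ha c)]
  have holder := integral_mul_le_Lp_mul_Lq_of_nonneg (Real.holderConjugate_one_div hθ hσ hθσ)
    (hf0.mono fun a ha => Real.rpow_nonneg ha θ) (hg0.mono fun a ha => Real.rpow_nonneg ha σ)
    (memLp hθ hf hf0) (memLp hσ hg hg0)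
  rwa [one_div_one_div, one_div_one_div, integral_congr_ae (rpow_rpow_inv hθ hf0),
    integral_congr_ae (rpow_rpow_inv hσ hg0)] at holder

theorem MeasureTheory.Integrable.rpow_mul_rpow {f g : α → ℝ} {θ σ : ℝ} (hθ : 0 ≤ θ) (hσ : 0 ≤ σ)
    (hθσ : θ + σ = 1) (hf : Integrable f μ) (hg : Integrable g μ)
    (hf0 : 0 ≤ᵐ[μ] f) (hg0 : 0 ≤ᵐ[μ] g) :
    Integrable (fun a => f a ^ θ * g a ^ σ) μ := by
  refine ((hf.const_mul θ).add (hg.const_mul σ)).mono'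
    ((hf.aemeasurable.pow_const θ).mul (hg.aemeasurable.pow_const σ)).aestronglyMeasurable ?_
  filter_upwards [hf0, hg0] with a ha hb
  rw [Real.norm_of_nonneg (mul_nonneg (Real.rpow_nonneg ha θ) (Real.rpow_nonneg hb σ))]
  exact Real.geom_mean_le_arith_mean2_weighted hθ hσ ha hb hθσ

theorem integral_pos_of_ae_pos {f : α → ℝ} (hμ : μ ≠ 0) (hf : Integrable f μ)
    (hpos : ∀ᵐ a ∂μ, 0 < f a) : 0 < ∫ a, f a ∂μ := by
  rw [integral_pos_iff_support_of_nonneg_ae (hpos.mono fun _ h => h.le) hf]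
  refine pos_iff_ne_zero.2 fun h0 => hμ (ae_eq_bot.1 (eventually_false_iff_eq_bot.1 ?_))
  filter_upwards [hpos, measure_eq_zero_iff_ae_notMem.1 h0] with a h1 h2
  exact h2 h1.ne'

theorem integral_lt_integral_of_ae_lt {f g : α → ℝ} (hμ : μ ≠ 0) (hf : Integrable f μ)
    (hg : Integrable g μ) (hlt : ∀ᵐ a ∂μ, f a < g a) : ∫ a, f a ∂μ < ∫ a, g a ∂μ := by
  rw [← sub_pos, ← integral_sub hg hf]
  exact integral_pos_of_ae_pos hμ (hg.sub hf) (hlt.mono fun _ h => sub_pos.2 h)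

theorem hasSum_integral_exp_mul {f w : α → ℝ} {R : ℝ} (hf : AEStronglyMeasurable f μ)
    (hfR : ∀ᵐ a ∂μ, |f a| ≤ R) (hw : Integrable w μ) :
    HasSum (fun n : ℕ => ∫ a, f a ^ n / n ! * w a ∂μ) (∫ a, exp (f a) * w a ∂μ) := by
  have hexp : ∀ y : ℝ, HasSum (fun n : ℕ => y ^ n / n !) (exp y) := fun y => by
    simpa only [Real.exp_eq_exp_ℝ] using NormedSpace.expSeries_div_hasSum_exp y
  refine hasSum_integral_of_dominated_convergence (fun n a => R ^ n / n ! * ‖w a‖)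
    (fun n => ((hf.pow n).mul_const _).mul hw.1) (fun n => ?_)
    (ae_of_all _ fun a => (hexp R).summable.mul_right _) ?_
    (ae_of_all _ fun a => (hexp (f a)).mul_right (w a))
  · filter_upwards [hfR] with a ha
    rw [norm_mul, norm_div, norm_pow, Real.norm_natCast, Real.norm_eq_abs]
    gcongr
  · simp_rw [tsum_mul_right, (hexp R).tsum_eq]
    exact hw.norm.const_mul _

end IntegralInequalities

theorem convexOn_mul_add {s : Set ℝ} (hs : Convex ℝ s) (c d : ℝ) :
    ConvexOn ℝ s fun ν => c * ν + d :=
  ((LinearMap.mulLeft ℝ c).convexOn hs).add_const d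

section LogConvex

variable {E : Type*} [AddCommGroup E] [Module ℝ E] {s : Set E} {g : E → ℝ}

theorem log_rpow_mul_rpow {u v : ℝ} (hu : 0 < u) (hv : 0 < v) (θ σ : ℝ) :
    log (u ^ θ * v ^ σ) = θ * log u + σ * log v := by
  rw [Real.log_mul (Real.rpow_pos_of_pos hu θ).ne' (Real.rpow_pos_of_pos hv σ).ne',
    Real.log_rpow hu, Real.log_rpow hv]

theorem convexOn_log_iff_forall_pos (hg : ∀ ν ∈ s, 0 < g ν) :
    ConvexOn ℝ s (fun ν => log (g ν)) ↔ Convex ℝ s ∧ ∀ ⦃a⦄, a ∈ s → ∀ ⦃b⦄, b ∈ s →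
      ∀ ⦃θ σ : ℝ⦄, 0 < θ → 0 < σ → θ + σ = 1 → g (θ • a + σ • b) ≤ g a ^ θ * g b ^ σ := by
  rw [convexOn_iff_forall_pos]
  refine and_congr_right fun hs => forall₂_congr fun a ha => forall₂_congr fun b hb =>
    forall₂_congr fun θ σ => forall₃_congr fun hθ hσ hθσ => ?_
  rw [← Real.log_le_log_iff (hg _ (hs ha hb hθ.le hσ.le hθσ)) (by positivity [hg a ha, hg b hb]),
    log_rpow_mul_rpow (hg a ha) (hg b hb), smul_eq_mul, smul_eq_mul]

theorem strictConvexOn_log_iff (hg : ∀ ν ∈ s, 0 < g ν) :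
    StrictConvexOn ℝ s (fun ν => log (g ν)) ↔ Convex ℝ s ∧ ∀ ⦃a⦄, a ∈ s → ∀ ⦃b⦄, b ∈ s →
      a ≠ b → ∀ ⦃θ σ : ℝ⦄, 0 < θ → 0 < σ → θ + σ = 1 →
        g (θ • a + σ • b) < g a ^ θ * g b ^ σ := by
  refine and_congr_right fun hs => forall₂_congr fun a ha => forall₂_congr fun b hb =>
    forall_congr' fun _ => forall₂_congr fun θ σ => forall₃_congr fun hθ hσ hθσ => ?_
  rw [← Real.log_lt_log_iff (hg _ (hs ha hb hθ.le hσ.le hθσ)) (by positivity [hg a ha, hg b hb]),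
    log_rpow_mul_rpow (hg a ha) (hg b hb), smul_eq_mul, smul_eq_mul]

variable {α : Type*} [MeasurableSpace α] {μ : Measure α} {F : E → α → ℝ}

theorem convexOn_log_integral (hμ : μ ≠ 0) (hint : ∀ ν ∈ s, Integrable (F ν) μ)
    (hpos : ∀ᵐ t ∂μ, ∀ ν ∈ s, 0 < F ν t) (hconv : ∀ᵐ t ∂μ, ConvexOn ℝ s fun ν => log (F ν t)) :
    ConvexOn ℝ s fun ν => log (∫ t, F ν t ∂μ) := by
  have : (ae μ).NeBot := ae_neBot.2 hμ
  obtain ⟨-, hs, -⟩ := hconv.exists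
  have hF0 : ∀ ν ∈ s, 0 ≤ᵐ[μ] F ν := fun ν hν => hpos.mono fun t ht => (ht ν hν).le
  rw [convexOn_log_iff_forall_pos fun ν hν =>
    integral_pos_of_ae_pos hμ (hint ν hν) (hpos.mono fun t ht => ht ν hν)]
  refine ⟨hs, fun a ha b hb θ σ hθ hσ hθσ => ?_⟩
  have hle : ∀ᵐ t ∂μ, F (θ • a + σ • b) t ≤ F a t ^ θ * F b t ^ σ := by
    filter_upwards [hpos, hconv] with t ht hct
    exact ((convexOn_log_iff_forall_pos ht).1 hct).2 ha hb hθ hσ hθσ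
  calc ∫ t, F (θ • a + σ • b) t ∂μ ≤ ∫ t, F a t ^ θ * F b t ^ σ ∂μ :=
        integral_mono_ae (hint _ (hs ha hb hθ.le hσ.le hθσ))
          ((hint a ha).rpow_mul_rpow hθ.le hσ.le hθσ (hint b hb) (hF0 a ha) (hF0 b hb)) hle
    _ ≤ (∫ t, F a t ∂μ) ^ θ * (∫ t, F b t ∂μ) ^ σ :=
        integral_rpow_mul_rpow_le hθ hσ hθσ (hint a ha) (hint b hb) (hF0 a ha) (hF0 b hb)

theorem strictConvexOn_log_integral (hμ : μ ≠ 0) (hint : ∀ ν ∈ s, Integrable (F ν) μ)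
    (hpos : ∀ᵐ t ∂μ, ∀ ν ∈ s, 0 < F ν t)
    (hconv : ∀ᵐ t ∂μ, StrictConvexOn ℝ s fun ν => log (F ν t)) :
    StrictConvexOn ℝ s fun ν => log (∫ t, F ν t ∂μ) := by
  have : (ae μ).NeBot := ae_neBot.2 hμ
  obtain ⟨-, hs, -⟩ := hconv.exists
  have hF0 : ∀ ν ∈ s, 0 ≤ᵐ[μ] F ν := fun ν hν => hpos.mono fun t ht => (ht ν hν).le
  rw [strictConvexOn_log_iff fun ν hν =>
    integral_pos_of_ae_pos hμ (hint ν hν) (hpos.mono fun t ht => ht ν hν)]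
  refine ⟨hs, fun a ha b hb hab θ σ hθ hσ hθσ => ?_⟩
  have hlt : ∀ᵐ t ∂μ, F (θ • a + σ • b) t < F a t ^ θ * F b t ^ σ := by
    filter_upwards [hpos, hconv] with t ht hct
    exact ((strictConvexOn_log_iff ht).1 hct).2 ha hb hab hθ hσ hθσ
  calc ∫ t, F (θ • a + σ • b) t ∂μ < ∫ t, F a t ^ θ * F b t ^ σ ∂μ :=
        integral_lt_integral_of_ae_lt hμ
          (hint _ (hs ha hb hθ.le hσ.le hθσ))
          ((hint a ha).rpow_mul_rpow hθ.le hσ.le hθσ (hint b hb) (hF0 a ha) (hF0 b hb)) hlt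
    _ ≤ (∫ t, F a t ∂μ) ^ θ * (∫ t, F b t ∂μ) ^ σ :=
        integral_rpow_mul_rpow_le hθ hσ hθσ (hint a ha) (hint b hb) (hF0 a ha) (hF0 b hb)

end LogConvex

theorem cosh_le_exp_abs (y : ℝ) : cosh y ≤ exp |y| := by
  rw [← Real.cosh_abs, Real.cosh_eq]
  linarith [Real.exp_le_exp.2 (neg_le_self (abs_nonneg y))]

theorem sq_div_four_le_cosh {t : ℝ} (ht : 0 ≤ t) : t ^ 2 / 4 ≤ cosh t := by
  rw [Real.cosh_eq]
  nlinarith [Real.quadratic_le_exp_of_nonneg ht, Real.exp_pos (-t)]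

theorem integrableOn_exp_neg_mul_cosh_mul_cosh {x : ℝ} (hx : 0 < x) (ν : ℝ) :
    IntegrableOn (fun t => exp (-x * cosh t) * cosh (ν * t)) (Ioi 0) := by
  -- Gaussian majorant: `-x cosh t + |ν| t ≤ 2ν²/x - (x/8) t²` by `cosh t ≥ t²/4` and AM-GM.
  refine (((integrable_exp_neg_mul_sq (by positivity : 0 < x / 8)).const_mul
    (exp (2 * ν ^ 2 / x))).integrableOn).mono' (by fun_prop) ?_
  filter_upwards [ae_restrict_mem measurableSet_Ioi] with t ht
  rw [Real.norm_of_nonneg (by positivity), ← Real.exp_add]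
  have hcosh : cosh (ν * t) ≤ exp (|ν| * t) := by
    simpa only [abs_mul, abs_of_pos (mem_Ioi.1 ht)] using cosh_le_exp_abs (ν * t)
  have hamgm : 2 * ν ^ 2 / x + x / 8 * t ^ 2 - |ν| * t = (x * t - 4 * |ν|) ^ 2 / (8 * x) := by
    rw [← sq_abs ν]
    field_simp
    ring
  have : 0 ≤ (x * t - 4 * |ν|) ^ 2 / (8 * x) := by positivity
  calc exp (-x * cosh t) * cosh (ν * t) ≤ exp (-x * cosh t) * exp (|ν| * t) := by gcongr
    _ ≤ exp (2 * ν ^ 2 / x + -(x / 8) * t ^ 2) := by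
        rw [← Real.exp_add]
        refine Real.exp_le_exp.2 ?_
        nlinarith [mul_le_mul_of_nonneg_left (sq_div_four_le_cosh (mem_Ioi.1 ht).le) hx.le]

theorem besselK_pos {x : ℝ} (hx : 0 < x) (ν : ℝ) : 0 < besselK ν x :=
  integral_pos_of_ae_pos (by simp [Measure.restrict_eq_zero])
    (integrableOn_exp_neg_mul_cosh_mul_cosh hx ν) (ae_of_all _ fun t => by positivity)

theorem strictConvexOn_log_cosh : StrictConvexOn ℝ univ fun y => log (cosh y) := by
  have hderiv : deriv (fun y => log (cosh y)) = fun y => sinh y / cosh y :=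
    funext fun y => ((Real.hasDerivAt_cosh y).log (Real.cosh_pos y).ne').deriv
  have hderiv2 (y : ℝ) : HasDerivAt (fun y => sinh y / cosh y) (1 / cosh y ^ 2) y := by
    refine ((Real.hasDerivAt_sinh y).div (Real.hasDerivAt_cosh y)
      (Real.cosh_pos y).ne').congr_deriv ?_
    rw [← Real.cosh_sq_sub_sinh_sq y]
    ring
  refine strictConvexOn_of_deriv2_pos' convex_univ
    (Real.continuous_cosh.log fun y => (Real.cosh_pos y).ne').continuousOn fun y _ => ?_
  rw [Function.iterate_succ, Function.iterate_one, Function.comp_apply, hderiv,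
    (hderiv2 y).deriv]
  positivity

theorem strictConvexOn_log_cosh_mul {t : ℝ} (ht : t ≠ 0) :
    StrictConvexOn ℝ univ fun ν => log (cosh (ν * t)) := by
  refine ⟨convex_univ, fun a _ b _ hab θ σ hθ hσ hθσ => ?_⟩
  have := strictConvexOn_log_cosh.2 (mem_univ (a * t)) (mem_univ (b * t))
    (mul_left_injective₀ ht |>.ne hab) hθ hσ hθσ
  simpa only [smul_eq_mul, add_mul, mul_assoc] using this

theorem strictConvexOn_log_besselK {x : ℝ} (hx : 0 < x) :
    StrictConvexOn ℝ univ fun ν => log (besselK ν x) := by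
  refine strictConvexOn_log_integral (by simp [Measure.restrict_eq_zero])
    (fun ν _ => integrableOn_exp_neg_mul_cosh_mul_cosh hx ν)
    (ae_of_all _ fun t ν _ => by positivity) ?_
  filter_upwards [ae_restrict_mem measurableSet_Ioi] with t ht
  refine ((strictConvexOn_log_cosh_mul (ne_of_gt ht)).add_const (-x * cosh t)).congr
    fun ν _ => ?_
  rw [Pi.add_apply, Real.log_mul (Real.exp_pos _).ne' (Real.cosh_pos _).ne', Real.log_exp,
    add_comm]

theorem rpow_mul_rpow_le_rpow_add_rpow {u v : ℝ} (hu : 0 < u) (hu1 : u ≤ 1) (hv1 : 1 ≤ v)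
    (p : ℝ) : u ^ p * v ^ p ≤ u ^ p + v ^ p := by
  have hup := Real.rpow_pos_of_pos hu p
  have hvp := Real.rpow_pos_of_pos (zero_lt_one.trans_le hv1) p
  rcases le_total 0 p with hp | hp
  · nlinarith [Real.rpow_le_one hu.le hu1 hp]
  · nlinarith [Real.rpow_le_one_of_one_le_of_nonpos hv1 hp]

theorem one_sub_sq_rpow_le {s : ℝ} (hs : s ∈ Ioo (-1 : ℝ) 1) (p : ℝ) :
    (1 - s ^ 2) ^ p ≤ (1 - s) ^ p + (1 + s) ^ p := by
  obtain ⟨h₁, h₂⟩ := hs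
  rw [show 1 - s ^ 2 = (1 - s) * (1 + s) by ring,
    Real.mul_rpow (by linarith) (by linarith)]
  rcases le_total 0 s with hs | hs
  · exact rpow_mul_rpow_le_rpow_add_rpow (by linarith) (by linarith) (by linarith) p
  · rw [mul_comm, add_comm ((1 - s) ^ p)]
    exact rpow_mul_rpow_le_rpow_add_rpow (by linarith) (by linarith) (by linarith) p

theorem integrableOn_one_sub_sq_rpow {p : ℝ} (hp : -1 < p) :
    IntegrableOn (fun s : ℝ => (1 - s ^ 2) ^ p) (Ioo (-1) 1) := by
  have hrpow := intervalIntegral.intervalIntegrable_rpow' hp (a := 0) (b := 2)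
  have hsub : IntegrableOn (fun s : ℝ => (1 - s) ^ p) (Ioo (-1) 1) := by
    have := (hrpow.comp_sub_left 1).symm
    norm_num at this
    rwa [intervalIntegrable_iff_integrableOn_Ioo_of_le (by norm_num)] at this
  have hadd : IntegrableOn (fun s : ℝ => (1 + s) ^ p) (Ioo (-1) 1) := by
    have := hrpow.comp_add_left 1
    norm_num at this
    rwa [intervalIntegrable_iff_integrableOn_Ioo_of_le (by norm_num)] at this
  refine (hsub.add hadd).mono' (by fun_prop : Measurable _).aestronglyMeasurable ?_
  filter_upwards [ae_restrict_mem measurableSet_Ioo] with s hs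
  have : 0 ≤ 1 - s ^ 2 := by nlinarith [hs.1, hs.2]
  rw [Real.norm_of_nonneg (Real.rpow_nonneg this p)]
  exact one_sub_sq_rpow_le hs p

theorem intervalIntegrable_pow_mul_one_sub_sq_rpow (n : ℕ) {p : ℝ} (hp : -1 < p) :
    IntervalIntegrable (fun s : ℝ => s ^ n * (1 - s ^ 2) ^ p) volume (-1) 1 := by
  rw [intervalIntegrable_iff_integrableOn_Ioo_of_le (by norm_num)]
  refine (integrableOn_one_sub_sq_rpow hp).bdd_mul (c := 1) (by fun_prop) ?_
  filter_upwards [ae_restrict_mem measurableSet_Ioo] with s hs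
  rw [norm_pow, Real.norm_eq_abs]
  exact pow_le_one₀ (abs_nonneg s) (abs_le.2 ⟨hs.1.le, hs.2.le⟩)

theorem integrableOn_exp_mul_one_sub_sq_rpow (x : ℝ) {p : ℝ} (hp : -1 < p) :
    IntegrableOn (fun s => exp (x * s) * (1 - s ^ 2) ^ p) (Ioo (-1) 1) := by
  refine (integrableOn_one_sub_sq_rpow hp).bdd_mul (c := exp |x|) (by fun_prop) ?_
  filter_upwards [ae_restrict_mem measurableSet_Ioo] with s hs
  rw [Real.norm_of_nonneg (Real.exp_pos _).le]
  refine Real.exp_le_exp.2 ((le_abs_self _).trans ?_)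
  rw [abs_mul]
  exact mul_le_of_le_one_right (abs_nonneg x) (abs_le.2 ⟨hs.1.le, hs.2.le⟩)

theorem exp_mul_mul_one_sub_sq_rpow_pos (x : ℝ) {s : ℝ} (hs : s ∈ Ioo (-1 : ℝ) 1) (p : ℝ) :
    0 < exp (x * s) * (1 - s ^ 2) ^ p := by
  have : 0 < 1 - s ^ 2 := by nlinarith [hs.1, hs.2]
  positivity

theorem integral_symm_eq_zero_of_odd {f : ℝ → ℝ} (hf : ∀ x, f (-x) = -f x) (a : ℝ) :
    ∫ x in -a..a, f x = 0 := by
  have h := intervalIntegral.integral_comp_neg (a := -a) (b := a) f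
  simp only [hf, intervalIntegral.integral_neg, neg_neg] at h
  linarith

theorem integral_symm_eq_two_mul_of_even {f : ℝ → ℝ} (hf : ∀ x, f (-x) = f x) {a : ℝ}
    (hfi : IntervalIntegrable f volume (-a) a) : ∫ x in -a..a, f x = 2 * ∫ x in 0..a, f x := by
  have h0 : (0 : ℝ) ∈ uIcc (-a) a := by
    rw [mem_uIcc]; rcases le_total 0 a with h | h <;> [left; right] <;> constructor <;> linarith
  have hleft : ∫ x in -a..0, f x = ∫ x in 0..a, f x := by
    simpa only [hf, neg_zero, neg_neg] using intervalIntegral.integral_comp_neg (a := -a) (b := 0) f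
  rw [← intervalIntegral.integral_add_adjacent_intervals
    (hfi.mono_set (uIcc_subset_uIcc left_mem_uIcc h0))
    (hfi.mono_set (uIcc_subset_uIcc h0 right_mem_uIcc)), hleft, two_mul]

theorem sq_image_Ioo_zero_one : (fun t : ℝ => t ^ 2) '' Ioo 0 1 = Ioo 0 1 := by
  ext y
  constructor
  · rintro ⟨t, ⟨h0, h1⟩, rfl⟩
    exact ⟨by positivity, by nlinarith⟩
  · rintro ⟨h0, h1⟩
    exact ⟨√y, ⟨Real.sqrt_pos.2 h0, (Real.sqrt_lt_sqrt h0.le h1).trans_eq Real.sqrt_one⟩,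
      Real.sq_sqrt h0.le⟩

theorem integral_Ioo_zero_one_comp_sq (g : ℝ → ℝ) :
    ∫ u in Ioo 0 1, g u = ∫ t in Ioo 0 1, 2 * t * g (t ^ 2) := by
  conv_lhs => rw [← sq_image_Ioo_zero_one]
  rw [integral_image_eq_integral_abs_deriv_smul measurableSet_Ioo
    (fun t _ => by simpa using (hasDerivAt_pow 2 t).hasDerivWithinAt)
    (fun a ha b hb e => by rw [← Real.sqrt_sq ha.1.le, ← Real.sqrt_sq hb.1.le]; exact congrArg _ e)]
  refine setIntegral_congr_fun measurableSet_Ioo fun t ht => ?_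
  rw [smul_eq_mul, abs_of_pos (by linarith [ht.1])]

theorem integral_rpow_mul_one_sub_rpow {a b : ℝ} (ha : 0 < a) (hb : 0 < b) :
    ∫ u in Ioo 0 1, u ^ (a - 1) * (1 - u) ^ (b - 1) =
      Real.Gamma a * Real.Gamma b / Real.Gamma (a + b) := by
  have hbeta : Complex.betaIntegral a b =
      ((∫ u in Ioo 0 1, u ^ (a - 1) * (1 - u) ^ (b - 1) : ℝ) : ℂ) := by
    rw [Complex.betaIntegral, intervalIntegral.integral_of_le zero_le_one,
      integral_Ioc_eq_integral_Ioo, ← integral_complex_ofReal]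
    refine setIntegral_congr_fun measurableSet_Ioo fun u hu => ?_
    push_cast
    rw [Complex.ofReal_cpow hu.1.le, Complex.ofReal_cpow (by linarith [hu.2])]
    push_cast
    rfl
  have hΓ := Complex.Gamma_mul_Gamma_eq_betaIntegral (s := a) (t := b) (by simpa) (by simpa)
  rw [hbeta, ← Complex.ofReal_add, Complex.Gamma_ofReal, Complex.Gamma_ofReal,
    Complex.Gamma_ofReal] at hΓ
  norm_cast at hΓ
  rw [hΓ, mul_div_cancel_left₀ _ (Real.Gamma_pos_of_pos (add_pos ha hb)).ne']

theorem Gamma_nat_add_half_mul_factorial (n : ℕ) :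
    Real.Gamma (n + 1 / 2) * n ! * 4 ^ n = (2 * n)! * √π := by
  have h := Real.Gamma_mul_Gamma_add_half (n + 1 / 2)
  rw [show (n : ℝ) + 1 / 2 + 1 / 2 = (n : ℕ) + 1 by ring, Real.Gamma_nat_eq_factorial,
    show 2 * ((n : ℝ) + 1 / 2) = (2 * n : ℕ) + 1 by push_cast; ring, Real.Gamma_nat_eq_factorial,
    show (1 : ℝ) - ((2 * n : ℕ) + 1) = -(2 * n : ℕ) by push_cast; ring, Real.rpow_neg two_pos.le,
    Real.rpow_natCast, pow_mul] at h
  rw [h]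
  norm_num
  field_simp

theorem integral_pow_odd_mul_one_sub_sq_rpow (k : ℕ) (p : ℝ) :
    ∫ s in (-1 : ℝ)..1, s ^ (2 * k + 1) * (1 - s ^ 2) ^ p = 0 :=
  integral_symm_eq_zero_of_odd (fun s => by rw [Odd.neg_pow ⟨k, rfl⟩, neg_sq, neg_mul]) 1

theorem integral_pow_even_mul_one_sub_sq_rpow (k : ℕ) {p : ℝ} (hp : -1 < p) :
    ∫ s in (-1 : ℝ)..1, s ^ (2 * k) * (1 - s ^ 2) ^ p =
      Real.Gamma (k + 1 / 2) * Real.Gamma (p + 1) / Real.Gamma (k + p + 3 / 2) := by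
  have hsubst : ∀ t ∈ Ioo (0 : ℝ) 1,
      2 * t * ((t ^ 2) ^ ((k + 1 / 2 : ℝ) - 1) * (1 - t ^ 2) ^ (p + 1 - 1)) =
        2 * (t ^ (2 * k) * (1 - t ^ 2) ^ p) := by
    intro t ht
    have hpow : t * (t ^ 2) ^ ((k + 1 / 2 : ℝ) - 1) = t ^ (2 * k) := by
      rw [← Real.rpow_natCast t 2, ← Real.rpow_mul ht.1.le]
      conv_lhs => arg 1; rw [← Real.rpow_one t]
      rw [← Real.rpow_add ht.1, ← Real.rpow_natCast]
      push_cast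
      ring_nf
    rw [add_sub_cancel_right, ← hpow]
    ring
  rw [integral_symm_eq_two_mul_of_even (fun s => by rw [(even_two_mul k).neg_pow, neg_sq])
      (intervalIntegrable_pow_mul_one_sub_sq_rpow _ hp),
    intervalIntegral.integral_of_le zero_le_one, integral_Ioc_eq_integral_Ioo,
    ← integral_const_mul, ← setIntegral_congr_fun measurableSet_Ioo hsubst,
    ← integral_Ioo_zero_one_comp_sq fun u => u ^ ((k + 1 / 2 : ℝ) - 1) * (1 - u) ^ (p + 1 - 1),
    integral_rpow_mul_one_sub_rpow (by positivity) (by linarith)]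
  rw [show (k + 1 / 2 : ℝ) + (p + 1) = k + p + 3 / 2 by ring]

noncomputable def poissonIntegral (x ν : ℝ) : ℝ :=
  ∫ s in Ioo (-1 : ℝ) 1, exp (x * s) * (1 - s ^ 2) ^ (ν - 1 / 2)

theorem hasSum_poissonIntegral (x : ℝ) {ν : ℝ} (hν : -1 / 2 < ν) :
    HasSum (fun k : ℕ => x ^ (2 * k) / (2 * k)! *
      (Real.Gamma (k + 1 / 2) * Real.Gamma (ν + 1 / 2) / Real.Gamma (k + ν + 1)))
      (poissonIntegral x ν) := by
  have hp : -1 < ν - 1 / 2 := by linarith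
  have hbound : ∀ᵐ s ∂volume.restrict (Ioo (-1 : ℝ) 1), |x * s| ≤ |x| := by
    filter_upwards [ae_restrict_mem measurableSet_Ioo] with s hs
    rw [abs_mul]
    exact mul_le_of_le_one_right (abs_nonneg x) (abs_le.2 ⟨hs.1.le, hs.2.le⟩)
  have hterm (n : ℕ) :
      ∫ s in Ioo (-1 : ℝ) 1, (x * s) ^ n / n ! * (1 - s ^ 2) ^ (ν - 1 / 2) =
        x ^ n / n ! * ∫ s in (-1 : ℝ)..1, s ^ n * (1 - s ^ 2) ^ (ν - 1 / 2) := by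
    rw [intervalIntegral.integral_of_le (by norm_num), integral_Ioc_eq_integral_Ioo,
      ← integral_const_mul]
    congr 1 with s
    ring
  have hseries := hasSum_integral_exp_mul (by fun_prop) hbound (integrableOn_one_sub_sq_rpow hp)
  simp only [hterm] at hseries
  have hodd : ∀ n ∉ Set.range (fun k : ℕ => 2 * k),
      x ^ n / n ! * ∫ s in (-1 : ℝ)..1, s ^ n * (1 - s ^ 2) ^ (ν - 1 / 2) = 0 := by
    intro n hn
    rcases Nat.even_or_odd' n with ⟨k, rfl | rfl⟩
    · exact absurd ⟨k, rfl⟩ hn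
    · rw [integral_pow_odd_mul_one_sub_sq_rpow, mul_zero]
  rw [poissonIntegral]
  convert ((mul_right_injective₀ two_ne_zero).hasSum_iff hodd).2 hseries using 2 with k
  rw [Function.comp_apply, integral_pow_even_mul_one_sub_sq_rpow k hp,
    show ν - 1 / 2 + 1 = ν + 1 / 2 by ring, show (k : ℝ) + (ν - 1 / 2) + 3 / 2 = k + ν + 1 by ring]

theorem sqrt_pi_mul_Gamma_div_mul_besselI {x ν : ℝ} (hx : 0 < x) (hν : -1 / 2 < ν) :
    √π * Real.Gamma (ν + 1 / 2) / (2 * x ^ ν) * besselI ν x =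
      2 ^ (-(ν + 1)) * poissonIntegral x ν := by
  rw [besselI, ← tsum_mul_left, ← (hasSum_poissonIntegral x hν).tsum_eq, ← tsum_mul_left]
  refine tsum_congr fun n => ?_
  have hΓ : Real.Gamma (n + 1 / 2) = (2 * n)! * √π / (n ! * 4 ^ n) := by
    rw [← Gamma_nat_add_half_mul_factorial, mul_assoc, mul_div_cancel_right₀ _ (by positivity)]
  have hpow : (x / 2) ^ (2 * (n : ℝ) + ν) = x ^ (2 * n) * x ^ ν / (4 ^ n * 2 ^ ν) := by
    rw [Real.rpow_add (by positivity), show 2 * (n : ℝ) = (2 * n : ℕ) by push_cast; ring,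
      Real.rpow_natCast, Real.div_rpow hx.le zero_le_two, div_pow,
      show (4 : ℝ) ^ n = 2 ^ (2 * n) by rw [pow_mul]; norm_num]
    ring
  have htwo : (2 : ℝ) ^ (-(ν + 1)) = 1 / (2 * 2 ^ ν) := by
    rw [Real.rpow_neg zero_le_two, Real.rpow_add_one two_ne_zero, one_div, mul_comm]
  have : 0 < Real.Gamma (n + ν + 1) :=
    Real.Gamma_pos_of_pos (by linarith [n.cast_nonneg (α := ℝ)])
  rw [hΓ, hpow, htwo]
  field_simp

theorem poissonIntegral_pos (x : ℝ) {ν : ℝ} (hν : -1 / 2 < ν) : 0 < poissonIntegral x ν :=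
  integral_pos_of_ae_pos (by simp [Measure.restrict_eq_zero])
    (integrableOn_exp_mul_one_sub_sq_rpow x (by linarith))
    ((ae_restrict_mem measurableSet_Ioo).mono fun s hs => exp_mul_mul_one_sub_sq_rpow_pos x hs _)

theorem convexOn_log_poissonIntegral (x : ℝ) :
    ConvexOn ℝ (Ioi (-1 / 2)) fun ν => log (poissonIntegral x ν) := by
  refine convexOn_log_integral (by simp [Measure.restrict_eq_zero])
    (fun ν hν => integrableOn_exp_mul_one_sub_sq_rpow x (by linarith [mem_Ioi.1 hν]))
    ((ae_restrict_mem measurableSet_Ioo).mono fun s hs ν _ =>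
      exp_mul_mul_one_sub_sq_rpow_pos x hs _) ?_
  filter_upwards [ae_restrict_mem measurableSet_Ioo] with s hs
  have : 0 < 1 - s ^ 2 := by nlinarith [hs.1, hs.2]
  refine (convexOn_mul_add (convex_Ioi _) (log (1 - s ^ 2)) (x * s - log (1 - s ^ 2) / 2)).congr
    fun ν _ => ?_
  rw [Real.log_mul (Real.exp_pos _).ne' (Real.rpow_pos_of_pos this _).ne', Real.log_exp,
    Real.log_rpow this]
  ring

theorem convexOn_log_sqrt_pi_mul_Gamma_div_mul_besselI {x : ℝ} (hx : 0 < x) :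
    ConvexOn ℝ (Ioi (-1 / 2))
      fun ν => log (√π * Real.Gamma (ν + 1 / 2) / (2 * x ^ ν) * besselI ν x) := by
  refine ((convexOn_mul_add (convex_Ioi _) (-log 2) (-log 2)).add
    (convexOn_log_poissonIntegral x)).congr fun ν hν => ?_
  rw [sqrt_pi_mul_Gamma_div_mul_besselI hx hν, Real.log_mul (by positivity)
    (poissonIntegral_pos x hν).ne', Real.log_rpow two_pos]
  simp only [Pi.add_apply]
  ring

theorem stmt14 (x : ℝ) (hx : 0 < x) :
    StrictConvexOn ℝ (Ioi (-(1 : ℝ) / 2))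
      (fun ν : ℝ => Real.log
        (Real.sqrt Real.pi * Real.Gamma (ν + 1 / 2) / (2 * x ^ ν) *
          (besselI ν x * besselK ν x))) := by
  refine ((convexOn_log_sqrt_pi_mul_Gamma_div_mul_besselI hx).add_strictConvexOn
    ((strictConvexOn_log_besselK hx).subset (subset_univ _) (convex_Ioi _))).congr
    fun ν hν => ?_
  have hI : 0 < √π * Real.Gamma (ν + 1 / 2) / (2 * x ^ ν) * besselI ν x := by
    rw [sqrt_pi_mul_Gamma_div_mul_besselI hx hν]
    exact mul_pos (by positivity) (poissonIntegral_pos x hν)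
  rw [← mul_assoc, Real.log_mul hI.ne' (besselK_pos hx ν).ne']
  rfl
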